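/- arXiv:1108.0148 — 2 statements merged into one kernel-verified Lean document; each statement's English description precedes it below -/
import Mathlib

section
/- Let $h = (h_{ijk})$ be a real array indexed by $i,j,k \in \{1,\dots,2n\}$ that is fully symmetric in its three indices, and suppose that $\sum_{i=1}^{2n} (-1)^i h_{i\tilde{i}k} = 0$ for each $k$, where $\tilde{i} = i + (-1)^{i-1}$. Define $\mathcal{Q}(h) = \sum_{i,j,k} h_{ijk}^2 - 2\sum_{k}\sum_{i<j} (-1)^{i+j}(h_{i\tilde{i}k} h_{j\tilde{j}k} - h_{i\tilde{j}k} h_{j\tilde{i}k})$. Then $\mathcal{Q}(h) \geq \frac{2}{9}\sum_{i,j,k} h_{ijk}^2$. -/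
/-- The involution on `Fin (2*n)` swapping each even index with the following odd one
(in 1-indexed notation, `2m-1 ↔ 2m`, i.e. `ĩ = i + (-1)^(i-1)`). -/
def tl (n : ℕ) (i : Fin (2*n)) : Fin (2*n) :=
  ⟨if i.val % 2 = 0 then i.val + 1 else i.val - 1, by have := i.isLt; split <;> omega⟩

/-- The sign `(-1)^i` for a 1-indexed index `i`; since `Fin (2*n)` is 0-indexed,
this is `(-1)^(i.val+1)`. -/
def sg {m : ℕ} (i : Fin m) : ℝ := (-1)^(i.val + 1)

/-- The quadratic form `𝒬(h)` of Medoš–Wang. -/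
noncomputable def Qform (n : ℕ) (h : Fin (2*n) → Fin (2*n) → Fin (2*n) → ℝ) : ℝ :=
  (∑ i, ∑ j, ∑ k, (h i j k)^2)
    - 2 * ∑ k, ∑ i, ∑ j,
        (if i < j then
          sg i * sg j * (h i (tl n i) k * h j (tl n j) k - h i (tl n j) k * h j (tl n i) k)
        else 0)

lemma tl_val (n : ℕ) (i : Fin (2*n)) :
    (tl n i).val = if i.val % 2 = 0 then i.val + 1 else i.val - 1 := rfl

lemma tl_tl (n : ℕ) (i : Fin (2*n)) : tl n (tl n i) = i := by
  apply Fin.ext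
  rw [tl_val, tl_val]
  have := i.isLt
  split_ifs <;> omega

lemma sg_sq {m : ℕ} (i : Fin m) : sg i * sg i = 1 := by
  unfold sg
  rcases Nat.even_or_odd (i.val + 1) with hp | hp
  · rw [hp.neg_one_pow]; norm_num
  · rw [hp.neg_one_pow]; norm_num

section Sum3

variable {α : Type*} [Fintype α]

lemma sum3_comm12 (f : α → α → α → ℝ) :
    ∑ i, ∑ j, ∑ k, f i j k = ∑ i, ∑ j, ∑ k, f j i k := Finset.sum_comm

lemma sum3_comm23 (f : α → α → α → ℝ) :
    ∑ i, ∑ j, ∑ k, f i j k = ∑ i, ∑ j, ∑ k, f i k j :=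
  Finset.sum_congr rfl fun _ _ => Finset.sum_comm

lemma sum3_cyc' (f : α → α → α → ℝ) :
    ∑ i, ∑ j, ∑ k, f i j k = ∑ i, ∑ j, ∑ k, f k i j := by
  rw [sum3_comm12 f, sum3_comm23 (fun i j k => f j i k)]

lemma sum3_cyc (f : α → α → α → ℝ) :
    ∑ i, ∑ j, ∑ k, f i j k = ∑ i, ∑ j, ∑ k, f j k i := by
  rw [sum3_cyc' f, sum3_cyc' (fun i j k => f k i j)]

lemma sum3_comm13 (f : α → α → α → ℝ) :
    ∑ i, ∑ j, ∑ k, f i j k = ∑ i, ∑ j, ∑ k, f k j i := by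
  rw [sum3_comm12 f, sum3_cyc (fun i j k => f j i k)]

lemma sum3_congr {f g : α → α → α → ℝ} (hfg : ∀ i j k, f i j k = g i j k) :
    ∑ i, ∑ j, ∑ k, f i j k = ∑ i, ∑ j, ∑ k, g i j k :=
  Finset.sum_congr rfl fun i _ => Finset.sum_congr rfl fun j _ =>
    Finset.sum_congr rfl fun k _ => hfg i j k

/-- The key symmetrization estimate: if `G` is symmetric in its outer two slots, then
the "swap first two slots" correlation is at least `-(1/2)` of the square sum. -/
lemma key_symm (G : α → α → α → ℝ) (hG : ∀ i j k, G i j k = G k j i) :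
    0 ≤ 2 * (∑ i, ∑ j, ∑ k, (G i j k)^2) + 4 * ∑ i, ∑ j, ∑ k, G i j k * G j i k := by
  set SQ := ∑ i, ∑ j, ∑ k, (G i j k)^2 with hSQ
  set A := ∑ i, ∑ j, ∑ k, G i j k * G j i k with hA
  set s : α → α → α → ℝ := fun i j k =>
    G i j k + G i k j + G j i k + G j k i + G k i j + G k j i with hs
  have hs12 : ∀ i j k, s i j k = s j i k := by intro i j k; simp only [hs]; ring
  have hs23 : ∀ i j k, s i j k = s i k j := by intro i j k; simp only [hs]; ring
  have hs13 : ∀ i j k, s i j k = s k j i := by intro i j k; simp only [hs]; ring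
  have hscyc : ∀ i j k, s i j k = s j k i := by intro i j k; simp only [hs]; ring
  have hscyc' : ∀ i j k, s i j k = s k i j := by intro i j k; simp only [hs]; ring
  have hA2 : ∑ i, ∑ j, ∑ k, G i j k * G i k j = A := by
    have e1 : ∀ i j k : α, G i j k * G i k j = G k j i * G j k i := by
      intro i j k; rw [hG i j k, hG i k j]
    rw [sum3_congr e1, sum3_comm13 (fun i j k => G k j i * G j k i)]
  have hA3 : ∑ i, ∑ j, ∑ k, G i j k * G j k i = A := by
    have e1 : ∀ i j k : α, G i j k * G j k i = G k j i * G j k i := by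
      intro i j k; rw [hG i j k]
    rw [sum3_congr e1, sum3_comm13 (fun i j k => G k j i * G j k i)]
  have hA4 : ∑ i, ∑ j, ∑ k, G i j k * G k i j = A := by
    have e1 : ∀ i j k : α, G i j k * G k i j = G i j k * G j i k := by
      intro i j k; rw [hG k i j]
    rw [sum3_congr e1]
  have hA5 : ∑ i, ∑ j, ∑ k, G i j k * G k j i = SQ := by
    refine sum3_congr fun i j k => ?_
    rw [← hG i j k]; ring
  have h2 : ∑ i, ∑ j, ∑ k, G i j k * s i j k = 2 * SQ + 4 * A := by
    have expand : ∀ i j k : α, G i j k * s i j k =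
        (G i j k)^2 + G i j k * G i k j + G i j k * G j i k + G i j k * G j k i
          + G i j k * G k i j + G i j k * G k j i := by
      intro i j k; simp only [hs]; ring
    rw [sum3_congr expand]
    simp only [Finset.sum_add_distrib]
    rw [hA2, hA3, hA4, hA5]
    simp only [← hSQ, ← hA]
    ring
  have h1 : ∑ i, ∑ j, ∑ k, (s i j k)^2 = 6 * ∑ i, ∑ j, ∑ k, G i j k * s i j k := by
    have expand : ∀ i j k : α, (s i j k)^2 =
        G i j k * s i j k + G i k j * s i j k + G j i k * s i j k + G j k i * s i j k
          + G k i j * s i j k + G k j i * s i j k := by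
      intro i j k; nth_rewrite 1 [hs]; ring
    rw [sum3_congr expand]
    simp only [Finset.sum_add_distrib]
    have e2 : ∑ i, ∑ j, ∑ k, G i k j * s i j k = ∑ i, ∑ j, ∑ k, G i j k * s i j k := by
      rw [sum3_comm23 (fun i j k => G i k j * s i j k)]
      exact sum3_congr fun i j k => by rw [hs23 i j k]
    have e3 : ∑ i, ∑ j, ∑ k, G j i k * s i j k = ∑ i, ∑ j, ∑ k, G i j k * s i j k := by
      rw [sum3_comm12 (fun i j k => G j i k * s i j k)]
      exact sum3_congr fun i j k => by rw [hs12 i j k]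
    have e4 : ∑ i, ∑ j, ∑ k, G j k i * s i j k = ∑ i, ∑ j, ∑ k, G i j k * s i j k := by
      rw [sum3_cyc' (fun i j k => G j k i * s i j k)]
      exact sum3_congr fun i j k => by rw [hscyc' i j k]
    have e5 : ∑ i, ∑ j, ∑ k, G k i j * s i j k = ∑ i, ∑ j, ∑ k, G i j k * s i j k := by
      rw [sum3_cyc (fun i j k => G k i j * s i j k)]
      exact sum3_congr fun i j k => by rw [hscyc i j k]
    have e6 : ∑ i, ∑ j, ∑ k, G k j i * s i j k = ∑ i, ∑ j, ∑ k, G i j k * s i j k := by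
      rw [sum3_comm13 (fun i j k => G k j i * s i j k)]
      exact sum3_congr fun i j k => by rw [hs13 i j k]
    rw [e2, e3, e4, e5, e6]; ring
  have hpos : 0 ≤ ∑ i, ∑ j, ∑ k, (s i j k)^2 :=
    Finset.sum_nonneg fun i _ => Finset.sum_nonneg fun j _ =>
      Finset.sum_nonneg fun k _ => sq_nonneg _
  rw [h1, h2] at hpos
  linarith

end Sum3

lemma double_ite {α : Type*} [Fintype α] [LinearOrder α] (F : α → α → ℝ)
    (hsym : ∀ i j, F i j = F j i) (hdiag : ∀ i, F i i = 0) :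
    2 * (∑ i, ∑ j, if i < j then F i j else 0) = ∑ i, ∑ j, F i j := by
  have h1 : ∑ i, ∑ j, F i j =
      ∑ i, ∑ j, ((if i < j then F i j else 0) + (if j < i then F i j else 0)
        + (if i = j then F i j else 0)) := by
    refine Finset.sum_congr rfl fun i _ => Finset.sum_congr rfl fun j _ => ?_
    rcases lt_trichotomy i j with hij | hij | hij
    · simp [hij, hij.ne, asymm hij]
    · subst hij; simp [lt_irrefl, hdiag]
    · simp [hij, hij.ne', asymm hij]
  rw [h1]
  simp only [Finset.sum_add_distrib]
  have h2 : (∑ i, ∑ j, if j < i then F i j else 0) = ∑ i, ∑ j, if i < j then F i j else 0 := by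
    rw [Finset.sum_comm]
    refine Finset.sum_congr rfl fun i _ => Finset.sum_congr rfl fun j _ => ?_
    rw [hsym]
  have h3 : (∑ i, ∑ j, if i = j then F i j else 0) = 0 := by
    have hrow : ∀ i : α, (∑ j, if i = j then F i j else 0) = 0 := by
      intro i
      rw [Finset.sum_ite_eq Finset.univ i (F i)]
      simp [hdiag]
    simp [hrow]
  rw [h2, h3]
  ring

theorem stmt_0 (n : ℕ) (hn : 0 < n) (h : Fin (2*n) → Fin (2*n) → Fin (2*n) → ℝ)
    (hsym1 : ∀ i j k, h i j k = h j i k)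
    (hsym2 : ∀ i j k, h i j k = h i k j)
    (htrace : ∀ k, ∑ i, sg i * h i (tl n i) k = 0) :
    Qform n h ≥ (2/9) * ∑ i, ∑ j, ∑ k, (h i j k)^2 := by
  set G : Fin (2*n) → Fin (2*n) → Fin (2*n) → ℝ :=
    fun i j k => sg j * h i (tl n j) k with hGdef
  have hG : ∀ i j k, G i j k = G k j i := by
    intro i j k
    simp only [hGdef]
    rw [hsym2 i (tl n j) k, hsym1 i k (tl n j), hsym2 k i (tl n j)]
  set SQ := ∑ i, ∑ j, ∑ k, (h i j k)^2 with hSQdef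
  -- ∑ G^2 = SQ
  have hGsq : ∑ i, ∑ j, ∑ k, (G i j k)^2 = SQ := by
    have step1 : ∑ i, ∑ j, ∑ k, (G i j k)^2
        = ∑ i, ∑ j, ∑ k, (h i (tl n j) k)^2 := by
      refine sum3_congr fun i j k => ?_
      simp only [hGdef]
      rw [mul_pow, sq (sg j), sg_sq]
      ring
    rw [step1, hSQdef]
    refine Finset.sum_congr rfl fun i _ => ?_
    exact Equiv.sum_comp (Function.Involutive.toPerm (tl n) (tl_tl n))
      (fun j => ∑ k, (h i j k)^2)
  -- evaluate the double if-sum for each fixed k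
  have hkfull : ∀ k, (∑ i, ∑ j, sg i * sg j *
        (h i (tl n i) k * h j (tl n j) k - h i (tl n j) k * h j (tl n i) k))
      = -(∑ i, ∑ j, G i j k * G j i k) := by
    intro k
    have split : ∀ i j : Fin (2*n), sg i * sg j *
        (h i (tl n i) k * h j (tl n j) k - h i (tl n j) k * h j (tl n i) k)
        = (sg i * h i (tl n i) k) * (sg j * h j (tl n j) k) - G i j k * G j i k := by
      intro i j; simp only [hGdef]; ring
    calc (∑ i, ∑ j, sg i * sg j *
          (h i (tl n i) k * h j (tl n j) k - h i (tl n j) k * h j (tl n i) k))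
        = ∑ i, ∑ j, ((sg i * h i (tl n i) k) * (sg j * h j (tl n j) k)
            - G i j k * G j i k) := by
          exact Finset.sum_congr rfl fun i _ => Finset.sum_congr rfl fun j _ => split i j
      _ = (∑ i, ∑ j, (sg i * h i (tl n i) k) * (sg j * h j (tl n j) k))
            - ∑ i, ∑ j, G i j k * G j i k := by
          simp only [Finset.sum_sub_distrib]
      _ = (∑ i, sg i * h i (tl n i) k) * (∑ j, sg j * h j (tl n j) k)
            - ∑ i, ∑ j, G i j k * G j i k := by
          rw [Finset.sum_mul_sum]
      _ = -(∑ i, ∑ j, G i j k * G j i k) := by rw [htrace k]; ring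
  -- evaluate the ite-sum
  have hite : ∀ k, 2 * (∑ i, ∑ j, if i < j then sg i * sg j *
        (h i (tl n i) k * h j (tl n j) k - h i (tl n j) k * h j (tl n i) k) else 0)
      = -(∑ i, ∑ j, G i j k * G j i k) := by
    intro k
    rw [double_ite (fun i j => sg i * sg j *
        (h i (tl n i) k * h j (tl n j) k - h i (tl n j) k * h j (tl n i) k))
        (fun i j => by ring) (fun i => by ring)]
    exact hkfull k
  -- Qform = SQ + A
  have hQ : Qform n h = SQ + ∑ i, ∑ j, ∑ k, G i j k * G j i k := by
    rw [Qform, ← hSQdef]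
    have hsum : (2 : ℝ) * ∑ k, ∑ i, ∑ j, (if i < j then
          sg i * sg j * (h i (tl n i) k * h j (tl n j) k
            - h i (tl n j) k * h j (tl n i) k) else 0)
        = ∑ k, -(∑ i, ∑ j, G i j k * G j i k) := by
      rw [Finset.mul_sum]
      exact Finset.sum_congr rfl fun k _ => hite k
    rw [hsum]
    have reorder : ∑ k, -(∑ i, ∑ j, G i j k * G j i k)
        = -(∑ i, ∑ j, ∑ k, G i j k * G j i k) := by
      rw [Finset.sum_neg_distrib]
      rw [neg_inj]
      exact sum3_cyc' (fun a b c => G b c a * G c b a)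
    rw [reorder]
    ring
  have hkey := key_symm G hG
  rw [hGsq] at hkey
  have hSQnn : 0 ≤ SQ := by
    rw [hSQdef]
    exact Finset.sum_nonneg fun i _ => Finset.sum_nonneg fun j _ =>
      Finset.sum_nonneg fun k _ => sq_nonneg _
  rw [ge_iff_le, hQ]
  linarith
end

section
/- Let $h = (h_{ijk})$ be a real array indexed by $i,j,k \in \{1,\dots,2n\}$, symmetric in all three indices, with $\sum_{i=1}^{2n} (-1)^i h_{i\tilde{i}k} = 0$ for each $k$. Then $\sum_{i,j=1}^{2n} (-1)^{i+j} h_{i\tilde{i}k}\, h_{j\tilde{j}k} = 0$ for each $k$, and consequently $\mathcal{Q}(h) = \frac{1}{2}\sum_{i,j,k=1}^{2n} \big((-1)^i h_{i\tilde{j}k} + (-1)^j h_{\tilde{i}jk}\big)^2$, where $\mathcal{Q}(h) = \sum_{i,j,k} h_{ijk}^2 - 2\sum_k \sum_{i<j} (-1)^{i+j}(h_{i\tilde{i}k} h_{j\tilde{j}k} - h_{i\tilde{j}k} h_{j\tilde{i}k})$. -/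
lemma tl_invol (n : ℕ) : Function.Involutive (tl n) := by
  intro i
  unfold tl
  ext
  simp only
  split_ifs <;> omega

lemma sum_tl {n : ℕ} (f : Fin (2*n) → ℝ) : ∑ i, f (tl n i) = ∑ i, f i :=
  Equiv.sum_comp ((tl_invol n).toPerm) f

lemma sum_ite_lt {m : ℕ} (T : Fin m → Fin m → ℝ) (hsymm : ∀ i j, T i j = T j i)
    (hdiag : ∀ i, T i i = 0) :
    ∑ i, ∑ j, (if i < j then T i j else 0) = (1/2) * ∑ i, ∑ j, T i j := by
  have key : ∑ i, ∑ j, T i j = 2 * ∑ i, ∑ j, (if i < j then T i j else 0) := by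
    have step : ∀ i j : Fin m, T i j =
        (if i < j then T i j else 0) + (if j < i then T i j else 0)
          + (if i = j then T i j else 0) := by
      intro i j
      rcases lt_trichotomy i j with hlt | heq | hgt
      · simp [hlt, not_lt.mpr hlt.le, hlt.ne]
      · simp [heq]
      · simp [hgt, not_lt.mpr hgt.le, hgt.ne']
    calc ∑ i, ∑ j, T i j
        = ∑ i, ∑ j, ((if i < j then T i j else 0) + (if j < i then T i j else 0)
            + (if i = j then T i j else 0)) := by
          exact Finset.sum_congr rfl fun i _ => Finset.sum_congr rfl fun j _ => step i j
      _ = (∑ i, ∑ j, (if i < j then T i j else 0)) + (∑ i, ∑ j, (if j < i then T i j else 0))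
            + ∑ i, ∑ j, (if i = j then T i j else 0) := by
          simp [Finset.sum_add_distrib]
      _ = 2 * ∑ i, ∑ j, (if i < j then T i j else 0) := by
          have h2 : ∑ i, ∑ j, (if j < i then T i j else 0)
              = ∑ i, ∑ j, (if i < j then T i j else 0) := by
            rw [Finset.sum_comm]
            exact Finset.sum_congr rfl fun i _ => Finset.sum_congr rfl fun j _ => by
              rw [hsymm]
          have h3 : ∑ i : Fin m, ∑ j : Fin m, (if i = j then T i j else 0) = 0 := by
            have : ∀ i : Fin m, ∑ j : Fin m, (if i = j then T i j else 0) = 0 := by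
              intro i
              rw [Finset.sum_ite_eq]
              simp [hdiag]
            simp [this]
          rw [h2, h3]
          ring
  rw [key]; ring

theorem stmt_1 (n : ℕ) (hn : 0 < n) (h : Fin (2*n) → Fin (2*n) → Fin (2*n) → ℝ)
    (hsym1 : ∀ i j k, h i j k = h j i k)
    (hsym2 : ∀ i j k, h i j k = h i k j)
    (htrace : ∀ k, ∑ i, sg i * h i (tl n i) k = 0) :
    (∀ k, ∑ i, ∑ j, sg i * sg j * (h i (tl n i) k * h j (tl n j) k) = 0) ∧
      Qform n h
        = (1/2) * ∑ i, ∑ j, ∑ k, (sg i * h i (tl n j) k + sg j * h (tl n i) j k)^2 := by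
  have part1 : ∀ k, ∑ i, ∑ j, sg i * sg j * (h i (tl n i) k * h j (tl n j) k) = 0 := by
    intro k
    have e1 : ∑ i, ∑ j, sg i * sg j * (h i (tl n i) k * h j (tl n j) k)
        = (∑ i, sg i * h i (tl n i) k) * (∑ j, sg j * h j (tl n j) k) := by
      rw [Finset.sum_mul_sum]
      exact Finset.sum_congr rfl fun i _ => Finset.sum_congr rfl fun j _ => by ring
    rw [e1, htrace, zero_mul]
  refine ⟨part1, ?_⟩
  -- abbreviations
  set S : ℝ := ∑ i, ∑ j, ∑ k, (h i j k)^2 with hS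
  -- the cross term, with k outermost
  set C : ℝ := ∑ k, ∑ i, ∑ j, sg i * sg j * (h i (tl n j) k * h (tl n i) j k) with hC
  -- RHS = S + C
  have hRHS : (1/2) * ∑ i, ∑ j, ∑ k, (sg i * h i (tl n j) k + sg j * h (tl n i) j k)^2
      = S + C := by
    have expand : ∀ i j k, (sg i * h i (tl n j) k + sg j * h (tl n i) j k)^2
        = (h i (tl n j) k)^2 + (h (tl n i) j k)^2
          + 2 * (sg i * sg j * (h i (tl n j) k * h (tl n i) j k)) := by
      intro i j k
      have h1 := sg_sq i
      have h2 := sg_sq j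
      linear_combination (h i (tl n j) k)^2 * h1 + (h (tl n i) j k)^2 * h2
    have split : ∑ i, ∑ j, ∑ k, (sg i * h i (tl n j) k + sg j * h (tl n i) j k)^2
        = (∑ i, ∑ j, ∑ k, (h i (tl n j) k)^2) + (∑ i, ∑ j, ∑ k, (h (tl n i) j k)^2)
          + 2 * ∑ i, ∑ j, ∑ k, sg i * sg j * (h i (tl n j) k * h (tl n i) j k) := by
      rw [Finset.mul_sum]
      rw [← Finset.sum_add_distrib, ← Finset.sum_add_distrib]
      refine Finset.sum_congr rfl fun i _ => ?_
      rw [Finset.mul_sum, ← Finset.sum_add_distrib, ← Finset.sum_add_distrib]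
      refine Finset.sum_congr rfl fun j _ => ?_
      rw [Finset.mul_sum, ← Finset.sum_add_distrib, ← Finset.sum_add_distrib]
      exact Finset.sum_congr rfl fun k _ => expand i j k
    have sum1 : ∑ i, ∑ j, ∑ k, (h i (tl n j) k)^2 = S := by
      refine Finset.sum_congr rfl fun i _ => ?_
      exact sum_tl (fun j => ∑ k, (h i j k)^2)
    have sum2 : ∑ i, ∑ j, ∑ k, (h (tl n i) j k)^2 = S := by
      exact sum_tl (fun i => ∑ j, ∑ k, (h i j k)^2)
    have sumC : ∑ i, ∑ j, ∑ k, sg i * sg j * (h i (tl n j) k * h (tl n i) j k) = C := by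
      have t1 : ∑ i, ∑ j, ∑ k, sg i * sg j * (h i (tl n j) k * h (tl n i) j k)
          = ∑ i, ∑ k, ∑ j, sg i * sg j * (h i (tl n j) k * h (tl n i) j k) :=
        Finset.sum_congr rfl fun i _ => Finset.sum_comm
      rw [t1, Finset.sum_comm, hC]
    rw [split, sum1, sum2, sumC]
    ring
  rw [hRHS]
  -- LHS = S + C
  unfold Qform
  rw [← hS]
  have hmain : ∀ k : Fin (2*n), ∑ i, ∑ j,
      (if i < j then
        sg i * sg j * (h i (tl n i) k * h j (tl n j) k - h i (tl n j) k * h j (tl n i) k)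
      else 0)
      = -(1/2) * ∑ i, ∑ j, sg i * sg j * (h i (tl n j) k * h (tl n i) j k) := by
    intro k
    set T : Fin (2*n) → Fin (2*n) → ℝ := fun i j =>
      sg i * sg j * (h i (tl n i) k * h j (tl n j) k - h i (tl n j) k * h j (tl n i) k) with hT
    have hsymm : ∀ i j, T i j = T j i := by
      intro i j
      simp only [hT]
      rw [hsym1 i (tl n j) k, hsym1 j (tl n i) k]
      ring
    have hdiag : ∀ i, T i i = 0 := by intro i; simp only [hT]; ring
    rw [sum_ite_lt T hsymm hdiag]
    have hsplit : ∑ i, ∑ j, T i j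
        = (∑ i, ∑ j, sg i * sg j * (h i (tl n i) k * h j (tl n j) k))
          - ∑ i, ∑ j, sg i * sg j * (h i (tl n j) k * h (tl n i) j k) := by
      rw [← Finset.sum_sub_distrib]
      refine Finset.sum_congr rfl fun i _ => ?_
      rw [← Finset.sum_sub_distrib]
      refine Finset.sum_congr rfl fun j _ => ?_
      simp only [hT]
      rw [hsym1 j (tl n i) k]
      ring
    rw [hsplit, part1 k]
    ring
  have hsum : ∑ k, ∑ i, ∑ j,
      (if i < j then
        sg i * sg j * (h i (tl n i) k * h j (tl n j) k - h i (tl n j) k * h j (tl n i) k)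
      else 0) = -(1/2) * C := by
    rw [hC, Finset.mul_sum]
    exact Finset.sum_congr rfl fun k _ => hmain k
  rw [hsum]
  ring
end
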